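/- Let F = (x_1^2 + ... + x_m^2)(y_1^2 + ... + y_n^2) with m ≥ 1, n ≥ 2, and let T/F^⊥ be the apolar (Artinian Gorenstein) algebra. Then the Hilbert function of T/F^⊥ is: 1 in degree 0, m+n in degree 1, mn+2 in degree 2, m+n in degree 3, 1 in degree 4, and 0 in degrees ≥ 5. -/

import Mathlib

open MvPolynomial
open scoped Classical

/-- Differentiation of `F` by the monomial with exponent vector `m`:
`∂^m F`, defined coefficientwise via descending factorials. -/
noncomputable def contract {σ : Type*} (m : σ →₀ ℕ) (F : MvPolynomial σ ℂ) : MvPolynomial σ ℂ :=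
  ∑ k ∈ F.support, monomial (k - m) (F.coeff k * m.prod fun i e => (Nat.descFactorial (k i) e : ℂ))

/-- The apolarity (differentiation) action: `apolar g F = g ∘ F`. -/
noncomputable def apolar {σ : Type*} (g F : MvPolynomial σ ℂ) : MvPolynomial σ ℂ :=
  ∑ m ∈ g.support, g.coeff m • contract m F

lemma apolar_sum_subset {σ : Type*} (F g : MvPolynomial σ ℂ) (s : Finset (σ →₀ ℕ))
    (hs : g.support ⊆ s) : apolar g F = ∑ m ∈ s, g.coeff m • contract m F :=
  Finset.sum_subset hs fun m _ hm => by
    rw [MvPolynomial.notMem_support_iff.mp hm, zero_smul]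

/-- The annihilator `F^⊥ = {g | g ∘ F = 0}` as a `ℂ`-submodule of the ring of
differential operators. -/
noncomputable def perp {σ : Type*} (F : MvPolynomial σ ℂ) : Submodule ℂ (MvPolynomial σ ℂ) where
  carrier := {g | apolar g F = 0}
  zero_mem' := by simp [apolar]
  add_mem' := by
    intro a b ha hb
    simp only [Set.mem_setOf_eq] at *
    have h1 : apolar (a + b) F = ∑ m ∈ a.support ∪ b.support, (a + b).coeff m • contract m F :=
      apolar_sum_subset F _ _ MvPolynomial.support_add
    simp only [MvPolynomial.coeff_add, add_smul] at h1
    rw [Finset.sum_add_distrib,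
      ← apolar_sum_subset F a _ Finset.subset_union_left,
      ← apolar_sum_subset F b _ Finset.subset_union_right] at h1
    rw [h1, ha, hb, add_zero]
  smul_mem' := by
    intro c g hg
    simp only [Set.mem_setOf_eq] at *
    have h1 : apolar (c • g) F = ∑ m ∈ g.support, (c • g).coeff m • contract m F :=
      apolar_sum_subset F _ _ MvPolynomial.support_smul
    simp only [MvPolynomial.coeff_smul, smul_eq_mul, mul_smul] at h1
    rw [← Finset.smul_sum] at h1
    rw [h1, show (∑ m ∈ g.support, g.coeff m • contract m F) = apolar g F from rfl, hg, smul_zero]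

/-- Hilbert function in degree `d` of the graded quotient of the polynomial ring
by the `ℂ`-submodule `N`: the dimension of the image of the space of
degree-`d` homogeneous polynomials in the quotient. -/
noncomputable def hfQ {σ : Type*} (N : Submodule ℂ (MvPolynomial σ ℂ)) (d : ℕ) : ℕ :=
  Module.finrank ℂ ((homogeneousSubmodule σ ℂ d).map N.mkQ)

/-!
Under `g ↦ g ∘ F` the degree-`d` part of `T/F^⊥` is isomorphic to the space of order-`d`
partial derivatives of `F`, and contracting by `X^e · X_a` is `∂_a` after contracting by `X^e`,
so each of these spaces is spanned by the first partials of (a spanning set of) the previous one.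
For `F = q_x q_y`, with `q_x = ∑ x_i²` and `q_y = ∑ y_j²`, this gives in turn
`F`; `x_i q_y, q_x y_j`; `x_i y_j, q_x, q_y`; the variables; the constants; and then `0`.
Each of these families is linearly independent: for every member there is a differential
operator with constant coefficients that kills all the other members but not this one.
-/

theorem Finsupp.exists_eq_add_single_of_degree_eq_succ {σ : Type*} {e : σ →₀ ℕ} {d : ℕ}
    (he : e.degree = d + 1) : ∃ e' a, e'.degree = d ∧ e = e' + Finsupp.single a 1 := by
  obtain ⟨a, ha⟩ : ∃ a, e a ≠ 0 := by
    by_contra! h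
    simp [show e = 0 from Finsupp.ext h] at he
  have hle : Finsupp.single a 1 ≤ e := Finsupp.single_le_iff.mpr (Nat.one_le_iff_ne_zero.mpr ha)
  refine ⟨e - Finsupp.single a 1, a, ?_, (tsub_add_cancel_of_le hle).symm⟩
  have := congrArg Finsupp.degree (tsub_add_cancel_of_le hle)
  rw [map_add, Finsupp.degree_single, he] at this
  omega

theorem Submodule.finrank_map_mkQ_ker {K M N : Type*} [DivisionRing K] [AddCommGroup M]
    [Module K M] [AddCommGroup N] [Module K N] (f : M →ₗ[K] N) (p : Submodule K M) :
    Module.finrank K (p.map (LinearMap.ker f).mkQ) = Module.finrank K (p.map f) := by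
  have hinj : Function.Injective ((LinearMap.ker f).liftQ f le_rfl) :=
    LinearMap.ker_eq_bot.mp (Submodule.ker_liftQ_eq_bot _ _ _ le_rfl)
  rw [(Submodule.equivMapOfInjective _ hinj _).finrank_eq, ← Submodule.map_comp,
    Submodule.liftQ_mkQ]

theorem LinearIndependent.of_pairwise_linearMap_eq_zero {ι K M N : Type*} [DivisionRing K]
    [AddCommGroup M] [Module K M] [AddCommGroup N] [Module K N]
    (v : ι → M) (f : ι → M →ₗ[K] N) (h0 : Pairwise fun i j => f i (v j) = 0)
    (hne : ∀ i, f i (v i) ≠ 0) : LinearIndependent K v := by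
  refine linearIndependent_iff'.mpr fun s g hrel i hi => ?_
  have hsum := congrArg (f i) hrel
  rw [map_sum, map_zero, Finset.sum_eq_single i (fun j _ hji => by simp [h0 hji.symm])
    (fun h => (h hi).elim), map_smul] at hsum
  exact (smul_eq_zero.mp hsum).resolve_right (hne i)

section Partials
variable {σ : Type*}

lemma prod_descFactorial_add_single (e k : σ →₀ ℕ) (a : σ) :
    ((e + Finsupp.single a 1).prod fun i t => (Nat.descFactorial (k i) t : ℂ)) =
      (e.prod fun i t => (Nat.descFactorial (k i) t : ℂ)) * ((k - e) a : ℕ) := by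
  set s := (e + Finsupp.single a 1).support
  have hs : e.support ⊆ s := Finsupp.support_mono le_self_add
  have ha : (((k - e) a : ℕ) : ℂ) =
      ∏ i ∈ s, if i = a then (((k - e) i : ℕ) : ℂ) else 1 := by
    simp [s]
  rw [Finsupp.prod_of_support_subset e hs _ (by simp),
    Finsupp.prod_of_support_subset _ subset_rfl _ (by simp), ha, ← Finset.prod_mul_distrib]
  refine Finset.prod_congr rfl fun i _ => ?_
  rcases eq_or_ne i a with rfl | hia
  · simp [Nat.descFactorial_succ, mul_comm]
  · simp [hia]

lemma contract_eq_sum_of_support_subset (e : σ →₀ ℕ) {F : MvPolynomial σ ℂ}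
    {s : Finset (σ →₀ ℕ)} (hs : F.support ⊆ s) :
    contract e F = ∑ k ∈ s,
      monomial (k - e) (F.coeff k * e.prod fun i t => (Nat.descFactorial (k i) t : ℂ)) :=
  Finset.sum_subset hs fun k _ hk => by rw [notMem_support_iff.mp hk, zero_mul, map_zero]

lemma contract_monomial (e k : σ →₀ ℕ) (c : ℂ) :
    contract e (monomial k c) =
      monomial (k - e) (c * e.prod fun i t => (Nat.descFactorial (k i) t : ℂ)) := by
  rw [contract_eq_sum_of_support_subset e support_monomial_subset]
  simp

lemma contract_add (e : σ →₀ ℕ) (F G : MvPolynomial σ ℂ) :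
    contract e (F + G) = contract e F + contract e G := by
  rw [contract_eq_sum_of_support_subset e support_add,
    contract_eq_sum_of_support_subset e Finset.subset_union_left,
    contract_eq_sum_of_support_subset e Finset.subset_union_right, ← Finset.sum_add_distrib]
  simp [add_mul]

lemma contract_zero_left (F : MvPolynomial σ ℂ) : contract 0 F = F := by
  conv_rhs => rw [← F.support_sum_monomial_coeff]
  simp [contract]

lemma contract_add_single (e : σ →₀ ℕ) (a : σ) (F : MvPolynomial σ ℂ) :
    contract (e + Finsupp.single a 1) F = pderiv a (contract e F) := by
  induction F using MvPolynomial.induction_on' with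
  | monomial k c =>
    rw [contract_monomial, contract_monomial, pderiv_monomial, tsub_tsub,
      prod_descFactorial_add_single, mul_assoc]
  | add F G hF hG => rw [contract_add, contract_add, hF, hG, map_add]

noncomputable def apolarₗ (F : MvPolynomial σ ℂ) :
    MvPolynomial σ ℂ →ₗ[ℂ] MvPolynomial σ ℂ where
  toFun g := apolar g F
  map_add' a b := by
    rw [apolar_sum_subset F _ _ support_add,
      apolar_sum_subset F a _ Finset.subset_union_left,
      apolar_sum_subset F b _ Finset.subset_union_right, ← Finset.sum_add_distrib]
    simp only [coeff_add, add_smul]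
  map_smul' c g := by
    rw [apolar_sum_subset F _ _ support_smul, apolar, Finset.smul_sum]
    simp only [coeff_smul, smul_eq_mul, mul_smul, RingHom.id_apply]

lemma apolar_monomial_one (e : σ →₀ ℕ) (F : MvPolynomial σ ℂ) :
    apolar (monomial e 1) F = contract e F := by
  rw [apolar_sum_subset F _ _ support_monomial_subset]
  simp

noncomputable def partials (F : MvPolynomial σ ℂ) (d : ℕ) :
    Submodule ℂ (MvPolynomial σ ℂ) :=
  (homogeneousSubmodule σ ℂ d).map (apolarₗ F)

lemma hfQ_perp (F : MvPolynomial σ ℂ) (d : ℕ) :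
    hfQ (perp F) d = Module.finrank ℂ (partials F d) :=
  Submodule.finrank_map_mkQ_ker (apolarₗ F) _

lemma partials_eq_span (F : MvPolynomial σ ℂ) (d : ℕ) :
    partials F d = Submodule.span ℂ ((fun e => contract e F) '' {e | e.degree = d}) := by
  rw [partials, homogeneousSubmodule_eq_finsupp_supported,
    AddMonoidAlgebra.supported_eq_span_single, Submodule.map_span, ← Set.image_comp]
  congr 1
  exact Set.image_congr fun e _ => apolar_monomial_one e F

lemma partials_zero (F : MvPolynomial σ ℂ) : partials F 0 = Submodule.span ℂ {F} := by
  simp [partials_eq_span, Finsupp.degree_eq_zero_iff, contract_zero_left]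

lemma partials_succ (F : MvPolynomial σ ℂ) (d : ℕ) :
    partials F (d + 1) = ⨆ a, (partials F d).map (pderiv a).toLinearMap := by
  simp only [partials_eq_span, Submodule.map_span, Submodule.iSup_span]
  congr 1
  ext p
  simp only [Set.mem_iUnion, Set.mem_image, Set.mem_ofPred]
  constructor
  · rintro ⟨e, he, rfl⟩
    obtain ⟨e', a, he', rfl⟩ := Finsupp.exists_eq_add_single_of_degree_eq_succ he
    exact ⟨a, _, ⟨e', he', rfl⟩, (contract_add_single e' a F).symm⟩
  · rintro ⟨a, _, ⟨e, he, rfl⟩, rfl⟩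
    exact ⟨e + Finsupp.single a 1, by simp [he], contract_add_single e a F⟩

lemma partials_succ_le {F : MvPolynomial σ ℂ} {d : ℕ} {S : Set (MvPolynomial σ ℂ)}
    (h : partials F d = Submodule.span ℂ S) {N : Submodule ℂ (MvPolynomial σ ℂ)}
    (hS : ∀ a, ∀ p ∈ S, pderiv a p ∈ N) : partials F (d + 1) ≤ N := by
  rw [partials_succ, h]
  exact iSup_le fun a => (Submodule.map_span_le _ _ _).mpr (hS a)

lemma pderiv_mem_partials_succ {F : MvPolynomial σ ℂ} {d : ℕ}
    {S : Set (MvPolynomial σ ℂ)} (h : partials F d = Submodule.span ℂ S) (a : σ)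
    {p : MvPolynomial σ ℂ} (hp : p ∈ S) : pderiv a p ∈ partials F (d + 1) := by
  rw [partials_succ, h]
  exact Submodule.mem_iSup_of_mem a (Submodule.mem_map_of_mem (Submodule.subset_span hp))

end Partials

section Quadrics
variable {m n : ℕ}

noncomputable def quadX (m n : ℕ) : MvPolynomial (Fin m ⊕ Fin n) ℂ := ∑ i, X (Sum.inl i) ^ 2

noncomputable def quadY (m n : ℕ) : MvPolynomial (Fin m ⊕ Fin n) ℂ := ∑ j, X (Sum.inr j) ^ 2

@[simp] lemma pderiv_inl_quadX (i : Fin m) :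
    pderiv (Sum.inl i) (quadX m n) = (2 : ℂ) • X (Sum.inl i) := by
  simp [quadX, Pi.single_apply, two_smul]

@[simp] lemma pderiv_inr_quadX (j : Fin n) : pderiv (Sum.inr j) (quadX m n) = 0 := by
  simp [quadX]

@[simp] lemma pderiv_inl_quadY (i : Fin m) : pderiv (Sum.inl i) (quadY m n) = 0 := by
  simp [quadY]

@[simp] lemma pderiv_inr_quadY (j : Fin n) :
    pderiv (Sum.inr j) (quadY m n) = (2 : ℂ) • X (Sum.inr j) := by
  simp [quadY, Pi.single_apply, two_smul]

noncomputable def firstPartials (m n : ℕ) :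
    Fin m ⊕ Fin n → MvPolynomial (Fin m ⊕ Fin n) ℂ :=
  Sum.elim (fun i => X (Sum.inl i) * quadY m n) (fun j => quadX m n * X (Sum.inr j))

noncomputable def secondPartials (m n : ℕ) :
    (Fin m × Fin n) ⊕ Fin 2 → MvPolynomial (Fin m ⊕ Fin n) ℂ :=
  Sum.elim (fun p => X (Sum.inl p.1) * X (Sum.inr p.2)) ![quadX m n, quadY m n]

lemma pderiv_quadX_mul_quadY (a : Fin m ⊕ Fin n) :
    pderiv a (quadX m n * quadY m n) = (2 : ℂ) • firstPartials m n a := by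
  rcases a with i | j <;> simp [firstPartials, mul_comm]

lemma pderiv_firstPartials_inl (i : Fin m) (a : Fin m ⊕ Fin n) :
    pderiv a (firstPartials m n (Sum.inl i)) =
      Sum.elim (fun i' => if i = i' then secondPartials m n (Sum.inr 1) else 0)
        (fun j => (2 : ℂ) • secondPartials m n (Sum.inl (i, j))) a := by
  rcases a with i' | j <;> simp [firstPartials, secondPartials, Pi.single_apply]

lemma pderiv_firstPartials_inr (j : Fin n) (a : Fin m ⊕ Fin n) :
    pderiv a (firstPartials m n (Sum.inr j)) =
      Sum.elim (fun i => (2 : ℂ) • secondPartials m n (Sum.inl (i, j)))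
        (fun j' => if j = j' then secondPartials m n (Sum.inr 0) else 0) a := by
  rcases a with i | j' <;> simp [firstPartials, secondPartials, Pi.single_apply, mul_comm]

lemma pderiv_secondPartials_mem_span_X (k : (Fin m × Fin n) ⊕ Fin 2) (a : Fin m ⊕ Fin n) :
    pderiv a (secondPartials m n k) ∈ Submodule.span ℂ (Set.range X) := by
  have hX (b : Fin m ⊕ Fin n) :
      X b ∈ Submodule.span ℂ (Set.range (X : _ → MvPolynomial (Fin m ⊕ Fin n) ℂ)) :=
    Submodule.subset_span ⟨b, rfl⟩
  rcases k with ⟨i, j⟩ | k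
  · rcases a with i' | j' <;>
      simp [secondPartials, Pi.single_apply, hX,
        apply_ite (· ∈ Submodule.span ℂ (Set.range X))]
  · fin_cases k <;> rcases a with i' | j' <;> simp [secondPartials, hX]

lemma partials_one : partials (quadX m n * quadY m n) 1 =
    Submodule.span ℂ (Set.range (firstPartials m n)) := by
  have h0 := partials_zero (quadX m n * quadY m n)
  refine le_antisymm (partials_succ_le h0 ?_)
    (Submodule.span_le.mpr (Set.range_subset_iff.mpr ?_))
  · rintro a _ rfl
    rw [pderiv_quadX_mul_quadY]
    exact Submodule.smul_mem _ _ (Submodule.subset_span ⟨a, rfl⟩)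
  · intro a
    have := pderiv_mem_partials_succ h0 a rfl
    rwa [pderiv_quadX_mul_quadY, Submodule.smul_mem_iff _ two_ne_zero] at this

lemma partials_two (i0 : Fin m) (j0 : Fin n) : partials (quadX m n * quadY m n) 2 =
    Submodule.span ℂ (Set.range (secondPartials m n)) := by
  have h1 := partials_one (m := m) (n := n)
  refine le_antisymm (partials_succ_le h1 ?_)
    (Submodule.span_le.mpr (Set.range_subset_iff.mpr ?_))
  · have hv (k) : secondPartials m n k ∈ Submodule.span ℂ (Set.range (secondPartials m n)) :=
      Submodule.subset_span ⟨k, rfl⟩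
    rintro a _ ⟨i | j, rfl⟩ <;> rcases a with i' | j' <;>
      simp [pderiv_firstPartials_inl, pderiv_firstPartials_inr, hv,
        apply_ite (· ∈ Submodule.span ℂ (Set.range (secondPartials m n)))]
  · rintro (⟨i, j⟩ | k)
    · have := pderiv_mem_partials_succ h1 (Sum.inr j) ⟨Sum.inl i, rfl⟩
      rwa [pderiv_firstPartials_inl, Sum.elim_inr, Submodule.smul_mem_iff _ two_ne_zero] at this
    · fin_cases k
      · have := pderiv_mem_partials_succ h1 (Sum.inr j0) ⟨Sum.inr j0, rfl⟩
        simpa [pderiv_firstPartials_inr] using this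
      · have := pderiv_mem_partials_succ h1 (Sum.inl i0) ⟨Sum.inl i0, rfl⟩
        simpa [pderiv_firstPartials_inl] using this

lemma partials_three (i0 : Fin m) (j0 : Fin n) : partials (quadX m n * quadY m n) 3 =
    Submodule.span ℂ (Set.range X) := by
  have h2 := partials_two i0 j0
  refine le_antisymm (partials_succ_le h2 ?_)
    (Submodule.span_le.mpr (Set.range_subset_iff.mpr ?_))
  · rintro a _ ⟨k, rfl⟩
    exact pderiv_secondPartials_mem_span_X k a
  · rintro (i | j)
    · simpa [secondPartials] using
        pderiv_mem_partials_succ h2 (Sum.inr j0) ⟨Sum.inl (i, j0), rfl⟩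
    · simpa [secondPartials] using
        pderiv_mem_partials_succ h2 (Sum.inl i0) ⟨Sum.inl (i0, j), rfl⟩

lemma partials_four (i0 : Fin m) (j0 : Fin n) : partials (quadX m n * quadY m n) 4 =
    Submodule.span ℂ {1} := by
  have h3 := partials_three i0 j0
  refine le_antisymm (partials_succ_le h3 ?_)
    (Submodule.span_le.mpr (Set.singleton_subset_iff.mpr ?_))
  · rintro a _ ⟨b, rfl⟩
    rw [pderiv_X, Pi.single_apply]
    split_ifs
    · exact Submodule.mem_span_singleton_self _
    · exact Submodule.zero_mem _
  · simpa using pderiv_mem_partials_succ h3 (Sum.inl i0) ⟨Sum.inl i0, rfl⟩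

lemma partials_eq_bot (i0 : Fin m) (j0 : Fin n) {d : ℕ} (hd : 5 ≤ d) :
    partials (quadX m n * quadY m n) d = ⊥ := by
  induction d, hd using Nat.le_induction with
  | base => exact le_bot_iff.mp (partials_succ_le (partials_four i0 j0) (by simp))
  | succ d _ ih => simp [partials_succ, ih]

lemma linearIndependent_firstPartials (i0 : Fin m) (j0 : Fin n) :
    LinearIndependent ℂ (firstPartials m n) := by
  refine .of_pairwise_linearMap_eq_zero _ (Sum.elim
    (fun i => (pderiv (Sum.inl i)).toLinearMap ∘ₗ (pderiv (Sum.inr j0)).toLinearMap ∘ₗ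
      (pderiv (Sum.inr j0)).toLinearMap)
    (fun j => (pderiv (Sum.inl i0)).toLinearMap ∘ₗ (pderiv (Sum.inl i0)).toLinearMap ∘ₗ
      (pderiv (Sum.inr j)).toLinearMap)) ?_ ?_
  · rintro (i | j) (i' | j') h <;> simp_all [firstPartials, Pi.single_apply, apply_ite, eq_comm]
  · rintro (i | j) <;> simp [firstPartials]

lemma linearIndependent_secondPartials (i0 : Fin m) (j0 : Fin n) :
    LinearIndependent ℂ (secondPartials m n) := by
  refine .of_pairwise_linearMap_eq_zero _ (Sum.elim
    (fun p => (pderiv (Sum.inr p.2)).toLinearMap ∘ₗ (pderiv (Sum.inl p.1)).toLinearMap)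
    ![(pderiv (Sum.inl i0)).toLinearMap ∘ₗ (pderiv (Sum.inl i0)).toLinearMap,
      (pderiv (Sum.inr j0)).toLinearMap ∘ₗ (pderiv (Sum.inr j0)).toLinearMap]) ?_ ?_
  · rintro (⟨i, j⟩ | k) (⟨i', j'⟩ | k') h <;> (try fin_cases k) <;> (try fin_cases k') <;>
      simp_all [secondPartials, Pi.single_apply, apply_ite, eq_comm]
  · rintro (⟨i, j⟩ | k)
    · simp [secondPartials]
    · fin_cases k <;> simp [secondPartials]

lemma quadX_mul_quadY_ne_zero (hm : m ≠ 0) (hn : n ≠ 0) : quadX m n * quadY m n ≠ 0 := by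
  intro h
  have := congrArg (eval fun _ => (1 : ℂ)) h
  simp [quadX, quadY, hm, hn] at this

end Quadrics

/-- For `F = (x_1^2 + ⋯ + x_m^2)(y_1^2 + ⋯ + y_n^2)` with `m ≥ 1`, `n ≥ 2`, the Hilbert
function of the apolar algebra `T/F^⊥` is `1, m+n, mn+2, m+n, 1` in degrees `0,…,4`
and `0` in degrees `≥ 5`. -/
theorem statement3 (m n : ℕ) (hm : 1 ≤ m) (hn : 2 ≤ n) :
    let F : MvPolynomial (Fin m ⊕ Fin n) ℂ :=
      (∑ i, (X (Sum.inl i)) ^ 2) * ∑ j, (X (Sum.inr j)) ^ 2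
    hfQ (perp F) 0 = 1 ∧ hfQ (perp F) 1 = m + n ∧ hfQ (perp F) 2 = m * n + 2 ∧
      hfQ (perp F) 3 = m + n ∧ hfQ (perp F) 4 = 1 ∧ ∀ d, 5 ≤ d → hfQ (perp F) d = 0 := by
  intro F
  have hF : F = quadX m n * quadY m n := rfl
  have i0 : Fin m := ⟨0, by omega⟩
  have j0 : Fin n := ⟨0, by omega⟩
  simp only [hfQ_perp, hF]
  refine ⟨?_, ?_, ?_, ?_, ?_, fun d hd => ?_⟩
  · rw [partials_zero, finrank_span_singleton (quadX_mul_quadY_ne_zero (by omega) (by omega))]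
  · rw [partials_one, finrank_span_eq_card (linearIndependent_firstPartials i0 j0)]
    simp
  · rw [partials_two i0 j0, finrank_span_eq_card (linearIndependent_secondPartials i0 j0)]
    simp
  · rw [partials_three i0 j0, finrank_span_eq_card (linearIndependent_X _ ℂ)]
    simp
  · rw [partials_four i0 j0, finrank_span_singleton one_ne_zero]
  · rw [partials_eq_bot i0 j0 hd, finrank_bot]
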